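/- Let X > 1/5 and Y ∈ ℝ with sin(2πY) > 0. Then −4πe^{−πX}(1+μ(X))·sin(2πY) ≤ ∂ϑ(X;Y)/∂Y ≤ −4πe^{−πX}(1−μ(X))·sin(2πY), where μ(X) = Σ_{n=2}^∞ n² e^{−π(n²−1)X}. -/

import Mathlib

/-!
Differentiating termwise, `∂ϑ/∂Y = -4π Σ_{n ≥ 1} n e^{-πn²X} sin(2πnY)`. The term `n = 1` is the
main term `-4π e^{-πX} sin(2πY)`, and since `|sin(2πnY)| ≤ n sin(2πY)` the terms `n ≥ 2` add up to
at most `4π e^{-πX} μ(X) sin(2πY)` in absolute value.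
-/

open Real

/-- The one-dimensional theta function `ϑ(X;Y) = Σ_{n∈ℤ} e^{−πn²X} e^{2πinY}` (real-valued). -/
noncomputable def theta1 (X Y : ℝ) : ℝ :=
  ∑' n : ℤ, Real.exp (-π * (n : ℝ) ^ 2 * X) * Real.cos (2 * π * (n : ℝ) * Y)

/-- `μ(X) = Σ_{n=2}^∞ n² e^{−π(n²−1)X}`. -/
noncomputable def mu (X : ℝ) : ℝ :=
  ∑' n : ℕ, ((n : ℝ) + 2) ^ 2 * Real.exp (-π * (((n : ℝ) + 2) ^ 2 - 1) * X)

theorem abs_sin_nat_mul_le (n : ℕ) (x : ℝ) : |sin (n * x)| ≤ n * |sin x| := by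
  induction n with
  | zero => simp
  | succ k ih =>
    calc |sin ((k + 1 : ℕ) * x)| = |sin (k * x) * cos x + cos (k * x) * sin x| := by
          rw [← sin_add]; push_cast; ring_nf
      _ ≤ |sin (k * x)| * |cos x| + |cos (k * x)| * |sin x| := by
          rw [← abs_mul, ← abs_mul]; exact abs_add_le _ _
      _ ≤ |sin (k * x)| + |sin x| :=
          add_le_add (mul_le_of_le_one_right (abs_nonneg _) (abs_cos_le_one x))
            (mul_le_of_le_one_left (abs_nonneg _) (abs_cos_le_one _))
      _ ≤ (k + 1 : ℕ) * |sin x| := by push_cast; linarith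

theorem tsum_int_eq_two_nsmul_tsum_nat_of_even {G : Type*} [AddCommGroup G] [UniformSpace G]
    [IsUniformAddGroup G] [CompleteSpace G] [T2Space G] {f : ℤ → G} (hf : f.Even) (hf0 : f 0 = 0)
    (hs : Summable f) : ∑' n, f n = 2 • ∑' n : ℕ, f n := by
  rw [tsum_int_eq_zero_add_two_mul_tsum_pnat hf hs, hf0, zero_add,
    tsum_pnat_eq_tsum_of_eq_zero (f := fun n : ℕ => f n) hf0]

noncomputable def theta1SinTerm (X Y t : ℝ) : ℝ := t * exp (-π * t ^ 2 * X) * sin (2 * π * t * Y)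

section

variable {X : ℝ}

theorem summable_abs_pow_mul_exp_neg_pi_mul_sq (hX : 0 < X) (k : ℕ) :
    Summable fun n : ℤ => |(n : ℝ)| ^ k * exp (-π * n ^ 2 * X) := by
  simpa [mul_comm X, mul_assoc] using summable_pow_mul_jacobiTheta₂_term_bound 0 hX k

theorem theta1SinTerm_neg (Y t : ℝ) : theta1SinTerm X Y (-t) = theta1SinTerm X Y t := by
  simp only [theta1SinTerm, neg_sq, mul_neg, neg_mul, sin_neg, neg_neg]

theorem abs_theta1SinTerm_le (Y t : ℝ) : |theta1SinTerm X Y t| ≤ |t| * exp (-π * t ^ 2 * X) := by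
  rw [theta1SinTerm, abs_mul, abs_mul, abs_exp]
  exact mul_le_of_le_one_right (by positivity) (abs_sin_le_one _)

theorem abs_theta1SinTerm_natCast_le (Y : ℝ) (n : ℕ) :
    |theta1SinTerm X Y n| ≤ n ^ 2 * exp (-π * n ^ 2 * X) * |sin (2 * π * Y)| := by
  have hsin : |sin (2 * π * n * Y)| ≤ n * |sin (2 * π * Y)| := by
    simpa only [mul_comm, mul_left_comm, mul_assoc] using abs_sin_nat_mul_le n (2 * π * Y)
  rw [theta1SinTerm, abs_mul, abs_mul, abs_exp, Nat.abs_cast]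
  calc (n : ℝ) * exp (-π * n ^ 2 * X) * |sin (2 * π * n * Y)|
      ≤ n * exp (-π * n ^ 2 * X) * (n * |sin (2 * π * Y)|) := by gcongr
    _ = n ^ 2 * exp (-π * n ^ 2 * X) * |sin (2 * π * Y)| := by ring

theorem hasDerivAt_theta1 (hX : 0 < X) (Y : ℝ) :
    HasDerivAt (theta1 X) (-(2 * π) * ∑' n : ℤ, theta1SinTerm X Y n) Y := by
  have hterm (n : ℤ) (y : ℝ) : HasDerivAt (fun y => exp (-π * n ^ 2 * X) * cos (2 * π * n * y))
      (-(2 * π) * theta1SinTerm X y n) y := by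
    refine (((hasDerivAt_id y).const_mul (2 * π * n)).cos.const_mul
      (exp (-π * n ^ 2 * X))).congr_deriv ?_
    simp only [theta1SinTerm, id]
    ring
  rw [← tsum_mul_left]
  refine hasDerivAt_tsum ((summable_abs_pow_mul_exp_neg_pi_mul_sq hX 1).mul_left (2 * π)) hterm
    (fun n y => ?_) (y₀ := Y) ?_ Y
  · rw [norm_mul, norm_neg, Real.norm_of_nonneg (by positivity), Real.norm_eq_abs, pow_one]
    exact mul_le_mul_of_nonneg_left (abs_theta1SinTerm_le y n) (by positivity)
  · refine (summable_abs_pow_mul_exp_neg_pi_mul_sq hX 0).of_norm_bounded fun n => ?_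
    rw [Real.norm_eq_abs, abs_mul, abs_exp, pow_zero, one_mul]
    exact mul_le_of_le_one_right (exp_pos _).le (abs_cos_le_one _)

theorem summable_theta1SinTerm (hX : 0 < X) (Y : ℝ) :
    Summable fun n : ℤ => theta1SinTerm X Y n :=
  (summable_abs_pow_mul_exp_neg_pi_mul_sq hX 1).of_norm_bounded fun n => by
    rw [Real.norm_eq_abs, pow_one]
    exact abs_theta1SinTerm_le Y n

theorem summable_mu_term (hX : 0 < X) :
    Summable fun n : ℕ => ((n : ℝ) + 2) ^ 2 * exp (-π * (((n : ℝ) + 2) ^ 2 - 1) * X) := by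
  have h := (summable_abs_pow_mul_exp_neg_pi_mul_sq hX 2).comp_injective Nat.cast_injective
  refine (((summable_nat_add_iff 2).mpr h).mul_left (exp (π * X))).congr fun n => ?_
  simp only [Function.comp_apply]
  push_cast
  rw [abs_of_nonneg (by positivity), mul_left_comm, ← exp_add]
  ring_nf

theorem deriv_theta1 (hX : 0 < X) (Y : ℝ) :
    deriv (theta1 X) Y = -(4 * π) * ∑' n : ℕ, theta1SinTerm X Y n := by
  have hs := summable_theta1SinTerm hX Y
  rw [(hasDerivAt_theta1 hX Y).deriv, tsum_int_eq_two_nsmul_tsum_nat_of_even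
    (fun n => by simpa only [Int.cast_neg] using theta1SinTerm_neg Y n)
    (by simp [theta1SinTerm]) hs, two_nsmul]
  push_cast
  ring

theorem abs_tsum_theta1SinTerm_nat_add_two_le (hX : 0 < X) (Y : ℝ) :
    |∑' n : ℕ, theta1SinTerm X Y ((n + 2 : ℕ) : ℝ)| ≤ exp (-π * X) * |sin (2 * π * Y)| * mu X := by
  refine tsum_of_norm_bounded (f := fun n : ℕ => theta1SinTerm X Y ((n + 2 : ℕ) : ℝ))
    ((summable_mu_term hX).hasSum.mul_left (exp (-π * X) * |sin (2 * π * Y)|)) fun n => ?_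
  rw [Real.norm_eq_abs]
  have hexp : exp (-π * ((n + 2 : ℕ) : ℝ) ^ 2 * X)
      = exp (-π * X) * exp (-π * (((n : ℝ) + 2) ^ 2 - 1) * X) := by
    rw [← exp_add]
    push_cast
    ring_nf
  refine (abs_theta1SinTerm_natCast_le Y (n + 2)).trans_eq ?_
  rw [hexp]
  push_cast
  ring

end

theorem deriv_theta1_bounds (X Y : ℝ) (hX : 1 / 5 < X) (hY : 0 < Real.sin (2 * π * Y)) :
    -(4 * π * Real.exp (-π * X) * (1 + mu X)) * Real.sin (2 * π * Y)
        ≤ deriv (fun y => theta1 X y) Y ∧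
    deriv (fun y => theta1 X y) Y
        ≤ -(4 * π * Real.exp (-π * X) * (1 - mu X)) * Real.sin (2 * π * Y) := by
  have hX0 : 0 < X := by linarith
  have hzero : theta1SinTerm X Y 0 = 0 := by simp [theta1SinTerm]
  have hfirst : theta1SinTerm X Y 1 = exp (-π * X) * sin (2 * π * Y) := by simp [theta1SinTerm]
  have hsplit : ∑' n : ℕ, theta1SinTerm X Y n
      = exp (-π * X) * sin (2 * π * Y) + ∑' n : ℕ, theta1SinTerm X Y ((n + 2 : ℕ) : ℝ) := by
    have hs : Summable fun n : ℕ => theta1SinTerm X Y n := by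
      simpa only [Function.comp_def, Int.cast_natCast] using
        (summable_theta1SinTerm hX0 Y).comp_injective Nat.cast_injective
    rw [← hs.sum_add_tsum_nat_add 2]
    simp [Finset.sum_range_succ, hzero, hfirst]
  have htail := abs_le.mp (abs_tsum_theta1SinTerm_nat_add_two_le hX0 Y)
  rw [abs_of_pos hY] at htail
  rw [show (fun y => theta1 X y) = theta1 X from rfl, deriv_theta1 hX0, hsplit]
  constructor <;> nlinarith [pi_pos, exp_pos (-π * X)]
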